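/- arXiv:2601.03616 — 5 statements merged into one kernel-verified Lean document; each statement's English description precedes it below -/
import Mathlib

section
/- Let n be a positive integer, let A be an n×n complex Hermitian positive semidefinite matrix, let u₀, f ∈ ℂⁿ, and let T > 0. Suppose w : ℝ → ℂⁿ is twice differentiable with w''(s) = −A·w(s) + f for all s ∈ ℝ, w(0) = u₀, and w'(0) = 0. Then the Duhamel solution u(T) := exp(−T·A)·u₀ + ∫₀ᵀ exp(−(T−s)·A)·f ds of the system du/dt = −A·u + f, u(0) = u₀, satisfies the Kannai transmutation identity u(T) = ∫_ℝ κ_T(s)·w(s) ds. -/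
/-!
Work in the orthonormal eigenbasis of `A`. Each coordinate `y` of `w` solves the scalar problem
`y'' = -λ y + c`, `y'(0) = 0` with `λ ≥ 0`; by conservation of the energy `|y'|² + λ |y|²` it is
`y(s) = cos (√λ s) (y(0) - c/λ) + c/λ` (or `y(0) + c s²/2` when `λ = 0`). The Kannai kernel `κ_T` is
the density of `N(0, 2T)`, and `E[cos (μX)] = e^{-T μ²}`, `E[X²] = 2T` for such `X`, so the
`κ_T`-average of `y` is `e^{-λT} y(0) + c (1 - e^{-λT})/λ`: the same coordinate of the Duhamel
solution.
-/

open MeasureTheory Real Matrix ProbabilityTheory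
open scoped ComplexOrder NNReal

section Oscillator

variable {E : Type*} [NormedAddCommGroup E] [InnerProductSpace ℝ E]

def IsOscillatorSolution (ν : ℝ) (c : E) (g g' : ℝ → E) : Prop :=
  ∀ s, HasDerivAt g (g' s) s ∧ HasDerivAt g' (-ν • g s + c) s

namespace IsOscillatorSolution

variable {ν : ℝ} {c : E} {g g' G G' : ℝ → E}

lemma sub (hg : IsOscillatorSolution ν c g g') (hG : IsOscillatorSolution ν c G G') :
    IsOscillatorSolution ν 0 (g - G) (g' - G') := fun s ↦
  ⟨(hg s).1.sub (hG s).1, ((hg s).2.sub (hG s).2).congr_deriv (by simp [smul_sub])⟩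

lemma eq_zero (hν : 0 ≤ ν) (hg : IsOscillatorSolution ν 0 g g') (h0 : g 0 = 0)
    (h'0 : g' 0 = 0) : g = 0 := by
  have henergy : ∀ s, HasDerivAt (fun t ↦ ‖g' t‖ ^ 2 + ν * ‖g t‖ ^ 2) 0 s := fun s ↦ by
    refine ((hg s).2.norm_sq.add ((hg s).1.norm_sq.const_mul ν)).congr_deriv ?_
    simp only [add_zero, inner_smul_right, real_inner_comm (g s)]
    ring
  have hconst : ∀ s, ‖g' s‖ ^ 2 + ν * ‖g s‖ ^ 2 = 0 := fun s ↦ by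
    simpa [h0, h'0] using is_const_of_deriv_eq_zero
      (fun t ↦ (henergy t).differentiableAt) (fun t ↦ (henergy t).deriv) s 0
  have hg' : ∀ s, g' s = 0 := fun s ↦ by
    have : ‖g' s‖ ^ 2 = 0 := by nlinarith [hconst s, sq_nonneg ‖g' s‖, sq_nonneg ‖g s‖]
    simpa using this
  funext s
  simpa [h0] using is_const_of_deriv_eq_zero (fun t ↦ (hg t).1.differentiableAt)
    (fun t ↦ by simpa [hg'] using (hg t).1.deriv) s 0

lemma eq (hν : 0 ≤ ν) (hg : IsOscillatorSolution ν c g g') (hG : IsOscillatorSolution ν c G G')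
    (h0 : g 0 = G 0) (h'0 : g' 0 = G' 0) : g = G :=
  sub_eq_zero.1 <| (hg.sub hG).eq_zero hν (sub_eq_zero.2 h0) (sub_eq_zero.2 h'0)

end IsOscillatorSolution

lemma isOscillatorSolution_cos (μ : ℝ) (b d : E) :
    IsOscillatorSolution (μ ^ 2) (μ ^ 2 • d) (fun s ↦ cos (μ * s) • b + d)
      (fun s ↦ -(μ * sin (μ * s)) • b) := fun s ↦ by
  have hcos : HasDerivAt (fun s ↦ cos (μ * s)) (-(μ * sin (μ * s))) s := by
    simpa [mul_comm] using ((hasDerivAt_id s).const_mul μ).cos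
  have hsin : HasDerivAt (fun s ↦ -(μ * sin (μ * s))) (-(μ ^ 2 * cos (μ * s))) s := by
    refine (((hasDerivAt_id s).const_mul μ).sin.const_mul μ).neg.congr_deriv ?_
    simp only [id, mul_one]
    ring
  refine ⟨(hcos.smul_const b).add_const d, (hsin.smul_const b).congr_deriv ?_⟩
  module

lemma isOscillatorSolution_quadratic (a c : E) :
    IsOscillatorSolution 0 c (fun s ↦ a + (s ^ 2 / 2) • c) (fun s ↦ s • c) := fun s ↦ by
  refine ⟨?_, by simpa using (hasDerivAt_id s).smul_const c⟩
  convert (((hasDerivAt_pow 2 s).div_const 2).smul_const c).const_add a using 1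
  simp

end Oscillator

lemma integrable_cos_mul_gaussianReal (μ m : ℝ) (v : ℝ≥0) :
    Integrable (fun x ↦ cos (μ * x)) (gaussianReal m v) :=
  .of_bound (by fun_prop) 1 (.of_forall fun x ↦ by simpa using abs_cos_le_one (μ * x))

lemma integral_cos_mul_gaussianReal (μ : ℝ) (v : ℝ≥0) :
    ∫ x, cos (μ * x) ∂gaussianReal 0 v = rexp (-(v * μ ^ 2 / 2)) := by
  have hint : Integrable (fun x : ℝ ↦ Complex.exp (μ * x * Complex.I)) (gaussianReal 0 v) :=
    .of_bound (by fun_prop) 1 (.of_forall fun x ↦ by simp [← Complex.ofReal_mul])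
  have h := congrArg Complex.re (charFun_gaussianReal (μ := 0) (v := v) μ)
  rw [charFun_apply_real, ← Complex.reCLM_apply, ← Complex.reCLM.integral_comp_comm hint] at h
  simp only [Complex.reCLM_apply, ← Complex.ofReal_mul, Complex.exp_ofReal_mul_I_re] at h
  rw [h, ← Complex.exp_ofReal_re]
  congr 2
  push_cast
  ring

lemma integrable_sq_gaussianReal (m : ℝ) (v : ℝ≥0) :
    Integrable (fun x : ℝ ↦ x ^ 2) (gaussianReal m v) :=
  (memLp_id_gaussianReal 2).integrable_sq

lemma integral_sq_gaussianReal (v : ℝ≥0) : ∫ x, x ^ 2 ∂gaussianReal 0 v = v := by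
  simpa using ((variance_fun_id_gaussianReal (μ := 0) (v := v)).symm.trans
    (variance_eq_integral measurable_id'.aemeasurable)).symm

lemma integral_gaussianReal_two_mul_eq_integral_smul {E : Type*} [NormedAddCommGroup E]
    [NormedSpace ℝ E] {T : ℝ≥0} (hT : T ≠ 0) (F : ℝ → E) :
    ∫ s, F s ∂gaussianReal 0 (2 * T) = ∫ s, ((√(4 * π * T))⁻¹ * rexp (-s ^ 2 / (4 * T))) • F s := by
  rw [integral_gaussianReal_eq_integral_smul (by positivity)]
  congr 1 with s
  simp only [gaussianPDFReal, NNReal.coe_mul, NNReal.coe_ofNat, sub_zero]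
  ring_nf

lemma integral_exp_neg_sub_mul {ν : ℝ} (hν : ν ≠ 0) (T : ℝ) :
    ∫ s in (0 : ℝ)..T, rexp (-(T - s) * ν) = (1 - rexp (-T * ν)) / ν := by
  have hderiv : ∀ s, HasDerivAt (fun s ↦ rexp (-(T - s) * ν) / ν) (rexp (-(T - s) * ν)) s :=
    fun s ↦ by
      refine ((((hasDerivAt_id s).const_sub T).neg.mul_const ν).exp.div_const ν).congr_deriv ?_
      simp only [Pi.neg_apply, id]
      field_simp
  rw [intervalIntegral.integral_eq_sub_of_hasDerivAt (fun s _ ↦ hderiv s)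
    ((by fun_prop : Continuous _).intervalIntegrable _ _)]
  simp [sub_div]

theorem IsOscillatorSolution.integral_gaussianReal {E : Type*} [NormedAddCommGroup E]
    [InnerProductSpace ℝ E] [CompleteSpace E] {ν : ℝ} {c : E} {g g' : ℝ → E} (hν : 0 ≤ ν)
    (hg : IsOscillatorSolution ν c g g') (hg'0 : g' 0 = 0) (T : ℝ≥0) :
    Integrable g (gaussianReal 0 (2 * T)) ∧
      ∫ s, g s ∂gaussianReal 0 (2 * T) =
        rexp (-T * ν) • g 0 + ∫ s in (0 : ℝ)..T, rexp (-(T - s) * ν) • c := by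
  generalize ha : g 0 = a
  rw [intervalIntegral.integral_smul_const]
  rcases hν.eq_or_lt with rfl | hν
  · obtain rfl := hg.eq le_rfl (isOscillatorSolution_quadratic a c) (by simp [ha])
      (by simpa using hg'0)
    have hsq := (integrable_sq_gaussianReal 0 (2 * T)).div_const 2
    refine ⟨(integrable_const _).add (hsq.smul_const c), ?_⟩
    rw [integral_add (integrable_const _) (hsq.smul_const c), integral_smul_const, integral_div,
      integral_sq_gaussianReal]
    simp
  · have hμ : √ν ^ 2 = ν := sq_sqrt hν.le
    have hG := isOscillatorSolution_cos (√ν) (a - ν⁻¹ • c) (ν⁻¹ • c)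
    rw [hμ, smul_inv_smul₀ hν.ne'] at hG
    obtain rfl := hg.eq hν.le hG (by simp [ha]) (by simpa using hg'0)
    have hcos := integrable_cos_mul_gaussianReal (√ν) 0 (2 * T)
    refine ⟨(hcos.smul_const _).add (integrable_const _), ?_⟩
    rw [integral_add (hcos.smul_const _) (integrable_const _), integral_smul_const,
      integral_cos_mul_gaussianReal, integral_const, integral_exp_neg_sub_mul hν.ne', hμ]
    simp only [probReal_univ, one_smul, NNReal.coe_mul, NNReal.coe_ofNat]
    rw [show -(2 * T * ν / 2) = -T * ν by ring]
    module

lemma Matrix.continuous_exp_smul {𝕜 ι : Type*} [RCLike 𝕜] [Fintype ι] [DecidableEq ι]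
    (A : Matrix ι ι 𝕜) : Continuous fun t : 𝕜 ↦ NormedSpace.exp (t • A) := by
  open scoped Matrix.Norms.Operator in
  exact NormedSpace.exp_continuous.comp (continuous_id.smul continuous_const)

namespace Matrix.IsHermitian

variable {ι : Type*} [Fintype ι] [DecidableEq ι] {A : Matrix ι ι ℂ} (hA : A.IsHermitian)

local notation "U" => (hA.eigenvectorUnitary : Matrix ι ι ℂ)

lemma star_eigenvectorUnitary_mul :
    star U * A = diagonal (fun i ↦ (hA.eigenvalues i : ℂ)) * star U := by
  have h := hA.conjStarAlgAut_star_eigenvectorUnitary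
  rw [Unitary.conjStarAlgAut_apply, Unitary.coe_star, star_star] at h
  calc star U * A = star U * A * U * star U := by
        rw [Matrix.mul_assoc _ U, Unitary.mul_star_self_of_mem hA.eigenvectorUnitary.2,
          Matrix.mul_one]
    _ = _ := by rw [h]; rfl

lemma star_eigenvectorUnitary_mul_exp (t : ℂ) :
    star U * NormedSpace.exp (t • A) =
      diagonal (fun i ↦ Complex.exp (t * hA.eigenvalues i)) * star U := by
  have hUU : U * star U = 1 := Unitary.mul_star_self_of_mem hA.eigenvectorUnitary.2
  have hUU' : star U * U = 1 := Unitary.star_mul_self_of_mem hA.eigenvectorUnitary.2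
  have hconj : t • A = (star U)⁻¹ * diagonal (fun i ↦ t * hA.eigenvalues i) * star U := by
    have hspec := hA.spectral_theorem
    rw [Unitary.conjStarAlgAut_apply] at hspec
    nth_rewrite 1 [hspec]
    rw [inv_eq_left_inv hUU, show (fun i ↦ t * (hA.eigenvalues i : ℂ)) =
      t • (RCLike.ofReal ∘ hA.eigenvalues) from rfl, diagonal_smul, Matrix.mul_smul,
      Matrix.smul_mul]
  rw [hconj, exp_conj' _ _ (.of_mul_eq_one_right U hUU), exp_diagonal, inv_eq_left_inv hUU,
    ← Matrix.mul_assoc, ← Matrix.mul_assoc, hUU', Matrix.one_mul]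
  congr 2 with i
  simp [Complex.exp_eq_exp_ℂ]

/-- `x ↦ ⟪vᵢ, x⟫` for the orthonormal eigenvectors `vᵢ`, the columns of `eigenvectorUnitary`. -/
noncomputable def eigenCoord (i : ι) : (ι → ℂ) →L[ℂ] ℂ :=
  LinearMap.toContinuousLinearMap ((LinearMap.proj i).comp (star U).mulVecLin)

lemma eigenCoord_apply (i : ι) (x : ι → ℂ) : hA.eigenCoord i x = (star U *ᵥ x) i := rfl

lemma mulVec_eigenCoord (x : ι → ℂ) : U *ᵥ (fun i ↦ hA.eigenCoord i x) = x := by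
  simp only [eigenCoord_apply, mulVec_mulVec, Unitary.mul_star_self_of_mem hA.eigenvectorUnitary.2,
    one_mulVec]

lemma eigenCoord_ext {x y : ι → ℂ} (h : ∀ i, hA.eigenCoord i x = hA.eigenCoord i y) : x = y := by
  rw [← hA.mulVec_eigenCoord x, ← hA.mulVec_eigenCoord y]
  simp only [h]

lemma eigenCoord_mulVec (i : ι) (x : ι → ℂ) :
    hA.eigenCoord i (A *ᵥ x) = hA.eigenvalues i * hA.eigenCoord i x := by
  rw [eigenCoord_apply, eigenCoord_apply, mulVec_mulVec, hA.star_eigenvectorUnitary_mul,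
    ← mulVec_mulVec, mulVec_diagonal]

lemma eigenCoord_exp_smul_mulVec (t : ℂ) (i : ι) (x : ι → ℂ) :
    hA.eigenCoord i (NormedSpace.exp (t • A) *ᵥ x) =
      Complex.exp (t * hA.eigenvalues i) * hA.eigenCoord i x := by
  rw [eigenCoord_apply, eigenCoord_apply, mulVec_mulVec, hA.star_eigenvectorUnitary_mul_exp,
    ← mulVec_mulVec, mulVec_diagonal]

lemma integrable_of_eigenCoord {X : Type*} [MeasurableSpace X] {μ : Measure X} {F : X → ι → ℂ}
    (h : ∀ i, Integrable (fun s ↦ hA.eigenCoord i (F s)) μ) : Integrable F μ := by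
  simpa only [LinearMap.coe_toContinuousLinearMap', mulVecLin_apply, hA.mulVec_eigenCoord] using
    (LinearMap.toContinuousLinearMap (U).mulVecLin).integrable_comp (Integrable.of_eval h)

end Matrix.IsHermitian

theorem kannai_transmutation_inhom_general
    (n : ℕ)
    (A : Matrix (Fin n) (Fin n) ℂ) (hA : A.PosSemidef)
    (u₀ f : Fin n → ℂ) (T : ℝ) (hT : 0 < T)
    (w : ℝ → Fin n → ℂ)
    (hw : Differentiable ℝ w)
    (hw' : Differentiable ℝ (deriv w))
    (hw'' : ∀ s : ℝ, deriv (deriv w) s = -(A.mulVec (w s)) + f)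
    (hw0 : w 0 = u₀) (hw'0 : deriv w 0 = 0) :
    (NormedSpace.exp (-(T : ℂ) • A)).mulVec u₀ +
        ∫ s in (0 : ℝ)..T, (NormedSpace.exp (-((T - s : ℝ) : ℂ) • A)).mulVec f =
      ∫ s : ℝ, ((Real.sqrt (4 * Real.pi * T))⁻¹ * Real.exp (-s ^ 2 / (4 * T))) • w s := by
  lift T to ℝ≥0 using hT.le
  have hAH := hA.1
  have hcoord : ∀ i, IsOscillatorSolution (hAH.eigenvalues i) (hAH.eigenCoord i f)
      (fun s ↦ hAH.eigenCoord i (w s)) (fun s ↦ hAH.eigenCoord i (deriv w s)) := fun i s ↦ by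
    have hℓ (x) := ((hAH.eigenCoord i).restrictScalars ℝ).hasFDerivAt (x := x)
    refine ⟨(hℓ _).comp_hasDerivAt s (hw s).hasDerivAt,
      ((hℓ _).comp_hasDerivAt s (hw' s).hasDerivAt).congr_deriv ?_⟩
    simp [hw'' s, hAH.eigenCoord_mulVec, Complex.real_smul]
  have key i := (hcoord i).integral_gaussianReal (hA.eigenvalues_nonneg i) (by simp [hw'0]) T
  rw [← integral_gaussianReal_two_mul_eq_integral_smul (by exact_mod_cast hT.ne')]
  refine hAH.eigenCoord_ext fun i ↦ ?_
  have hint : IntervalIntegrable (fun s : ℝ ↦ NormedSpace.exp (-((T - s : ℝ) : ℂ) • A) *ᵥ f)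
      volume 0 T :=
    (((continuous_exp_smul A).comp (by fun_prop)).matrix_mulVec
      continuous_const).intervalIntegrable _ _
  rw [map_add, ← (hAH.eigenCoord i).intervalIntegral_comp_comm hint,
    ← (hAH.eigenCoord i).integral_comp_comm (hAH.integrable_of_eigenCoord fun j ↦ (key j).1),
    (key i).2]
  simp only [hAH.eigenCoord_exp_smul_mulVec, hw0]
  simp [Complex.real_smul]

/-- Kannai transmutation identity: the Duhamel solution of
`du/dt = -A u + f`, `u(0) = u₀` at time `T` is the Gaussian average of the
wave-type solution `w'' = -A w + f`, `w(0) = u₀`, `w'(0) = 0`. -/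
theorem kannai_transmutation_inhom
    (n : ℕ) (hn : 0 < n)
    (A : Matrix (Fin n) (Fin n) ℂ) (hA : A.PosSemidef)
    (u₀ f : Fin n → ℂ) (T : ℝ) (hT : 0 < T)
    (w : ℝ → Fin n → ℂ)
    (hw : Differentiable ℝ w)
    (hw' : Differentiable ℝ (deriv w))
    (hw'' : ∀ s : ℝ, deriv (deriv w) s = -(A.mulVec (w s)) + f)
    (hw0 : w 0 = u₀) (hw'0 : deriv w 0 = 0) :
    (NormedSpace.exp (-(T : ℂ) • A)).mulVec u₀ +
        ∫ s in (0 : ℝ)..T, (NormedSpace.exp (-((T - s : ℝ) : ℂ) • A)).mulVec f =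
      ∫ s : ℝ, ((Real.sqrt (4 * Real.pi * T))⁻¹ * Real.exp (-s ^ 2 / (4 * T))) • w s :=
  kannai_transmutation_inhom_general n A hA u₀ f T hT w hw hw' hw'' hw0 hw'0
end

section
/- Let L be an m×n complex matrix, and let H be the (n+m)×(n+m) Hermitian block matrix H = [[0, i·Lᴴ], [−i·L, 0]]. Let u₀ ∈ ℂⁿ and let ψ₀ = (u₀, 0) ∈ ℂⁿ⁺ᵐ. Then for every T > 0, the first (ℂⁿ) block of the vector ∫_ℝ κ_T(s)·exp(−i·s·H)·ψ₀ ds equals exp(−T·Lᴴ·L)·u₀. -/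
/-!
Diagonalize the Hermitian matrix `H = U diag(μ) Uᴴ`. Then `e^{-isH} = U diag(e^{-isμⱼ}) Uᴴ`,
and averaging against the Kannai kernel acts on each eigenvalue through the Fourier transform
of the Gaussian, `∫ κ_T(s) e^{-isμ} ds = e^{-Tμ²}`; hence the average is `e^{-TH²}`. For the
Hermitian dilation of `L`, `H² = diag(LᴴL, LLᴴ)` is block diagonal, so `e^{-TH²}` maps
`(u₀, 0)` to `(e^{-TLᴴL} u₀, 0)`.
-/

open MeasureTheory Real Matrix Complex

noncomputable def kannaiKernel (T s : ℝ) : ℝ :=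
  (√(4 * π * T))⁻¹ * Real.exp (-s ^ 2 / (4 * T))

-- The right-hand side is in the shape `b s² + c s + d` of `integral_cexp_quadratic`.
lemma kannaiKernel_smul_cexp (T : ℝ) (z : ℂ) (s : ℝ) :
    kannaiKernel T s • cexp (-(I * s) * z) =
      ((√(4 * π * T) : ℝ) : ℂ)⁻¹ *
        cexp (-((4 * T : ℝ) : ℂ)⁻¹ * s ^ 2 + -(I * z) * s + 0) := by
  rw [kannaiKernel, Complex.real_smul]
  push_cast
  rw [mul_assoc, ← Complex.exp_add]
  congr 2
  field_simp
  ring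

lemma integrable_kannaiKernel_smul_cexp {T : ℝ} (hT : 0 < T) (z : ℂ) :
    Integrable fun s : ℝ => kannaiKernel T s • cexp (-(I * s) * z) := by
  simp_rw [kannaiKernel_smul_cexp]
  exact (integrable_cexp_quadratic (by simpa using hT) _ _).const_mul _

lemma integral_kannaiKernel_smul_cexp {T : ℝ} (hT : 0 < T) (z : ℂ) :
    ∫ s : ℝ, kannaiKernel T s • cexp (-(I * s) * z) = cexp (-T * z ^ 2) := by
  have h4πT : 0 < 4 * π * T := by positivity
  have hsqrt :
      (π / -(-((4 * T : ℝ) : ℂ)⁻¹)) ^ (1 / 2 : ℂ) = ((√(4 * π * T) : ℝ) : ℂ) := by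
    rw [neg_neg, div_inv_eq_mul, ← ofReal_mul,
      show (1 / 2 : ℂ) = ((1 / 2 : ℝ) : ℂ) by norm_num, ← ofReal_cpow (by positivity),
      ← Real.sqrt_eq_rpow]
    ring_nf
  simp_rw [kannaiKernel_smul_cexp]
  rw [integral_const_mul, integral_cexp_quadratic (by simpa using hT), hsqrt,
    inv_mul_cancel_left₀ (ofReal_ne_zero.mpr (Real.sqrt_ne_zero'.mpr h4πT))]
  have hT₀ : (T : ℂ) ≠ 0 := ofReal_ne_zero.mpr hT.ne'
  congr 1
  push_cast
  field_simp
  linear_combination z ^ 2 * T * I_sq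

namespace Matrix

variable {ι : Type*} [Fintype ι] [DecidableEq ι]

theorem mul_diagonal_mul_mulVec {R : Type*} [CommSemiring R] (U V : Matrix ι ι R)
    (d ψ : ι → R) :
    (U * diagonal d * V) *ᵥ ψ = ∑ j, (d j * (V *ᵥ ψ) j) • fun i => U i j := by
  rw [← mulVec_mulVec, ← mulVec_mulVec]
  ext i
  simp [mulVec, dotProduct, diagonal_apply, mul_comm]

open NormedSpace in
theorem exp_conjStarAlgAut_diagonal (U : unitaryGroup ι ℂ) (d : ι → ℂ) :
    exp (Unitary.conjStarAlgAut ℂ _ U (diagonal d)) =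
      Unitary.conjStarAlgAut ℂ _ U (diagonal fun j => cexp (d j)) := by
  refine (exp_units_conj (Unitary.toUnits U) (diagonal d)).trans ?_
  rw [exp_diagonal, Pi.exp_def, Complex.exp_eq_exp_ℂ]
  rfl

open NormedSpace in
theorem exp_conjStarAlgAut_diagonal_mulVec (U : unitaryGroup ι ℂ) (d ψ : ι → ℂ) :
    exp (Unitary.conjStarAlgAut ℂ _ U (diagonal d)) *ᵥ ψ =
      ∑ j, (cexp (d j) * (star (U : Matrix ι ι ℂ) *ᵥ ψ) j) • fun i => U i j := by
  rw [exp_conjStarAlgAut_diagonal, Unitary.conjStarAlgAut_apply, mul_diagonal_mul_mulVec]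

theorem IsHermitian.integral_kannaiKernel_smul_exp_mulVec {H : Matrix ι ι ℂ}
    (hH : H.IsHermitian) (ψ : ι → ℂ) {T : ℝ} (hT : 0 < T) :
    ∫ s : ℝ, kannaiKernel T s • (NormedSpace.exp (-(I * s) • H) *ᵥ ψ) =
      NormedSpace.exp (-(T : ℂ) • (H * H)) *ᵥ ψ := by
  set U := hH.eigenvectorUnitary
  set μ := hH.eigenvalues
  have hH' : H = Unitary.conjStarAlgAut ℂ _ U (diagonal fun j => (μ j : ℂ)) :=
    hH.spectral_theorem
  have hevol (s : ℝ) :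
      -(I * s) • H = Unitary.conjStarAlgAut ℂ _ U (diagonal fun j => -(I * s) * μ j) := by
    rw [hH', ← map_smul, ← diagonal_smul]
    rfl
  have hheat : -(T : ℂ) • (H * H) =
      Unitary.conjStarAlgAut ℂ _ U (diagonal fun j => -T * (μ j : ℂ) ^ 2) := by
    rw [hH', ← map_mul, ← map_smul, diagonal_mul_diagonal, ← diagonal_smul]
    congr with j
    simp [sq]
  simp_rw [hevol, hheat, exp_conjStarAlgAut_diagonal_mulVec, Finset.smul_sum, ← smul_assoc,
    ← smul_mul_assoc]
  rw [integral_finsetSum _ fun j _ =>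
    ((integrable_kannaiKernel_smul_cexp hT (μ j)).mul_const _).smul_const _]
  refine Finset.sum_congr rfl fun j _ => ?_
  rw [integral_smul_const, integral_mul_const, integral_kannaiKernel_smul_cexp hT]

open NormedSpace Norms.Operator in
theorem exp_fromBlocks_zero {m n : Type*} [Fintype m] [DecidableEq m] [Fintype n]
    [DecidableEq n] (A : Matrix m m ℂ) (D : Matrix n n ℂ) :
    exp (fromBlocks A 0 0 D) = fromBlocks (exp A) 0 0 (exp D) := by
  let blockDiag : Matrix m m ℂ × Matrix n n ℂ →+* Matrix (m ⊕ n) (m ⊕ n) ℂ :=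
    { toFun p := fromBlocks p.1 0 0 p.2
      map_one' := fromBlocks_one
      map_mul' p q := by simp [fromBlocks_multiply]
      map_zero' := fromBlocks_zero
      map_add' p q := by simp [fromBlocks_add] }
  have h := map_exp blockDiag
    (continuous_fst.matrix_fromBlocks continuous_const continuous_const continuous_snd) (A, D)
  simp only [blockDiag, RingHom.coe_mk, MonoidHom.coe_mk, OneHom.coe_mk, Prod.fst_exp,
    Prod.snd_exp] at h
  exact h.symm

end Matrix

noncomputable def hermitianDilation {m n : Type*} (L : Matrix m n ℂ) :
    Matrix (n ⊕ m) (n ⊕ m) ℂ :=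
  fromBlocks 0 (I • Lᴴ) (-I • L) 0

section HermitianDilation

variable {m n : Type*} (L : Matrix m n ℂ)

theorem isHermitian_hermitianDilation : (hermitianDilation L).IsHermitian := by
  simp [hermitianDilation, IsHermitian, fromBlocks_conjTranspose, conjTranspose_smul]

theorem hermitianDilation_mul_self [Fintype m] [Fintype n] :
    hermitianDilation L * hermitianDilation L = fromBlocks (Lᴴ * L) 0 0 (L * Lᴴ) := by
  simp [hermitianDilation, fromBlocks_multiply, smul_smul]

end HermitianDilation

/-- Kannai transform through the Hermitian dilation: the first block of the
Gaussian average of the unitary evolution `e^{-isH} ψ₀` equals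
`e^{-T LᴴL} u₀`, where `H = [[0, i Lᴴ], [-i L, 0]]` and `ψ₀ = (u₀, 0)`. -/
theorem kannai_hermitian_dilation
    (m n : ℕ) (L : Matrix (Fin m) (Fin n) ℂ)
    (H : Matrix (Fin n ⊕ Fin m) (Fin n ⊕ Fin m) ℂ)
    (hH : H = Matrix.fromBlocks 0 (Complex.I • Lᴴ) (-(Complex.I) • L) 0)
    (u₀ : Fin n → ℂ)
    (ψ₀ : Fin n ⊕ Fin m → ℂ) (hψ₀ : ψ₀ = Sum.elim u₀ 0)
    (T : ℝ) (hT : 0 < T) :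
    ∀ i : Fin n,
      (∫ s : ℝ, ((Real.sqrt (4 * Real.pi * T))⁻¹ * Real.exp (-s ^ 2 / (4 * T))) •
          (NormedSpace.exp (-(Complex.I * (s : ℂ)) • H)).mulVec ψ₀) (Sum.inl i) =
        ((NormedSpace.exp (-(T : ℂ) • (Lᴴ * L))).mulVec u₀) i := by
  intro i
  obtain rfl : H = hermitianDilation L := hH
  have hheat :=
    IsHermitian.integral_kannaiKernel_smul_exp_mulVec (isHermitian_hermitianDilation L) ψ₀ hT
  unfold kannaiKernel at hheat
  rw [hheat, hermitianDilation_mul_self, fromBlocks_smul, smul_zero, smul_zero,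
    exp_fromBlocks_zero, fromBlocks_mulVec, hψ₀]
  simp
end

section
/- Let T > 0 and let k be a natural number. Then for every s ∈ ℝ, the k-th derivative of the Kannai kernel satisfies |κ_T^{(k)}(s)| ≤ (2^{−k/2}·√((2k)!)/√π)·T^{−(k+1)/2}. -/
/-!
After the substitution `y = s / √(2T)` the kernel is `(4πT)^{-1/2} e^{-y²/2}`, so its `k`-th
derivative is `(4πT)^{-1/2} (2T)^{-k/2}` times the `k`-th derivative of the standard Gaussian,
which is `(-1)^k He_k(y) e^{-y²/2}` for the probabilists' Hermite polynomial `He_k`.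
The coefficients of `He_k` satisfy `|c_i| i! ≤ k!` and `|y|^i e^{-y²/2} ≤ i!`, whence
`|He_k(y)| e^{-y²/2} ≤ (k + 1)!`, and finally `(k + 1)!² ≤ 4 (2k)!`.
-/

open Polynomial Real Nat

theorem Nat.succ_factorial_sq_le_four_mul_factorial_two_mul :
    ∀ n : ℕ, (n + 1)! ^ 2 ≤ 4 * (2 * n)!
  | 0 => by decide
  | 1 => by decide
  | n + 2 => by
    have ih := succ_factorial_sq_le_four_mul_factorial_two_mul (n + 1)
    have key : (n + 3) ^ 2 ≤ (2 * n + 4) * (2 * n + 3) := by nlinarith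
    calc (n + 3)! ^ 2 = (n + 3) ^ 2 * (n + 2)! ^ 2 := by rw [factorial_succ (n + 2)]; ring
      _ ≤ (2 * n + 4) * (2 * n + 3) * (4 * (2 * n + 2)!) := Nat.mul_le_mul key ih
      _ = 4 * (2 * (n + 2))! := by
        rw [show 2 * (n + 2) = 2 * n + 3 + 1 by ring, factorial_succ (2 * n + 3),
          factorial_succ (2 * n + 2)]
        ring

theorem succ_factorial_le_two_mul_sqrt_factorial_two_mul (n : ℕ) :
    ((n + 1)! : ℝ) ≤ 2 * √((2 * n)! : ℝ) := by
  have h : ((n + 1)! : ℝ) ^ 2 ≤ 4 * (2 * n)! := by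
    exact_mod_cast succ_factorial_sq_le_four_mul_factorial_two_mul n
  nlinarith [sq_sqrt (Nat.cast_nonneg (α := ℝ) (2 * n)!), sqrt_nonneg ((2 * n)! : ℝ)]

theorem Real.rpow_neg_natCast_div_two {x : ℝ} (hx : 0 ≤ x) (n : ℕ) :
    x ^ (-(n : ℝ) / 2) = (√x)⁻¹ ^ n := by
  rw [sqrt_eq_rpow, ← rpow_neg hx, ← rpow_natCast, ← rpow_mul hx]
  ring_nf

theorem Real.abs_pow_mul_exp_neg_sq_div_two_le_factorial (x : ℝ) (i : ℕ) :
    |x| ^ i * exp (-(x ^ 2 / 2)) ≤ i ! := by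
  have hsq : (|x| ^ i * exp (-(x ^ 2 / 2))) ^ 2 = (x ^ 2) ^ i * exp (-x ^ 2) := by
    rw [mul_pow, ← pow_mul, mul_comm i 2, pow_mul, sq_abs, ← exp_nat_mul]
    congr 2
    push_cast
    ring
  have hsq_le : (|x| ^ i * exp (-(x ^ 2 / 2))) ^ 2 ≤ i ! := by
    rw [hsq, exp_neg, ← div_eq_mul_inv, div_le_iff₀ (exp_pos _), mul_comm]
    exact (div_le_iff₀ (by positivity)).1 (pow_div_factorial_le_exp _ (sq_nonneg x) i)
  have h1 : (1 : ℝ) ≤ i ! := by exact_mod_cast i.factorial_pos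
  exact le_of_pow_le_pow_left₀ two_ne_zero (by positivity) (hsq_le.trans (by nlinarith))

theorem Polynomial.abs_coeff_hermite_mul_factorial_le (n i : ℕ) :
    |(hermite n).coeff i| * i ! ≤ n ! := by
  rcases lt_or_ge n i with hlt | hle
  · simp [coeff_hermite_of_lt hlt]
  have key : (n - i - 1)‼ * n.choose i * i ! ≤ n ! := calc
      _ ≤ (n - i)! * n.choose i * i ! := by
        gcongr
        exact (doubleFactorial_le_factorial _).trans (factorial_le (sub_le _ _))
      _ = n ! := by rw [← choose_mul_factorial_mul_factorial hle]; ring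
  rw [coeff_hermite]
  split_ifs
  · simp only [abs_mul, abs_pow, abs_neg, abs_one, one_pow, one_mul, Nat.abs_cast]
    exact_mod_cast key
  · simp

theorem Polynomial.abs_aeval_hermite_mul_exp_neg_sq_div_two_le (n : ℕ) (x : ℝ) :
    |aeval x (hermite n)| * exp (-(x ^ 2 / 2)) ≤ (n + 1)! := by
  rw [aeval_eq_sum_range, natDegree_hermite]
  simp only [zsmul_eq_mul]
  calc |∑ i ∈ Finset.range (n + 1), ((hermite n).coeff i : ℝ) * x ^ i| * exp (-(x ^ 2 / 2))
      ≤ (∑ i ∈ Finset.range (n + 1), |((hermite n).coeff i : ℝ)| * |x| ^ i) *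
          exp (-(x ^ 2 / 2)) := by
        gcongr
        exact (Finset.abs_sum_le_sum_abs _ _).trans_eq (by simp [abs_mul])
    _ ≤ ∑ i ∈ Finset.range (n + 1), (n ! : ℝ) := by
        rw [Finset.sum_mul]
        gcongr with i
        calc _ = |((hermite n).coeff i : ℝ)| * (|x| ^ i * exp (-(x ^ 2 / 2))) := mul_assoc ..
          _ ≤ |((hermite n).coeff i : ℝ)| * i ! := by
              gcongr
              exact abs_pow_mul_exp_neg_sq_div_two_le_factorial x i
          _ ≤ n ! := by exact_mod_cast abs_coeff_hermite_mul_factorial_le n i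
    _ = (n + 1)! := by simp [factorial_succ]

theorem abs_iteratedDeriv_gaussian_le (n : ℕ) (x : ℝ) :
    |iteratedDeriv n (fun y => exp (-(y ^ 2 / 2))) x| ≤ (n + 1)! := by
  rw [iteratedDeriv_eq_iterate, deriv_gaussian_eq_hermite_mul_gaussian, mul_assoc, abs_mul,
    abs_pow, abs_neg, abs_one, one_pow, one_mul, abs_mul, abs_of_pos (exp_pos _)]
  exact abs_aeval_hermite_mul_exp_neg_sq_div_two_le n x

theorem two_mul_inv_sqrt_four_pi_mul_mul_inv_sqrt_two_mul_pow {T : ℝ} (hT : 0 < T) (k : ℕ) :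
    2 * (√(4 * π * T))⁻¹ * (√(2 * T))⁻¹ ^ k =
      2 ^ (-(k : ℝ) / 2) / √π * T ^ (-((k : ℝ) + 1) / 2) := by
  have hk : -((k : ℝ) + 1) / 2 = -((k + 1 : ℕ) : ℝ) / 2 := by push_cast; ring
  rw [hk, rpow_neg_natCast_div_two zero_le_two, rpow_neg_natCast_div_two hT.le,
    sqrt_mul' _ hT.le, sqrt_mul' _ hT.le, sqrt_mul zero_le_four,
    show (4 : ℝ) = 2 ^ 2 by norm_num, sqrt_sq zero_le_two]
  have := sqrt_pos.2 hT
  have := sqrt_pos.2 pi_pos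
  simp only [inv_pow, mul_pow]
  field_simp
  ring

/-- Bound on the `k`-th derivative of the Kannai (Gaussian) kernel
`κ_T(s) = (4πT)^{-1/2} e^{-s²/(4T)}`:
`|κ_T^{(k)}(s)| ≤ (2^{-k/2} √((2k)!)/√π) T^{-(k+1)/2}`. -/
theorem kannai_kernel_deriv_bound (T : ℝ) (hT : 0 < T) (k : ℕ) (s : ℝ) :
    |iteratedDeriv k
        (fun s : ℝ => (Real.sqrt (4 * Real.pi * T))⁻¹ * Real.exp (-s ^ 2 / (4 * T))) s| ≤
      (2 : ℝ) ^ (-(k : ℝ) / 2) * Real.sqrt (Nat.factorial (2 * k)) / Real.sqrt Real.pi *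
        T ^ (-((k : ℝ) + 1) / 2) := by
  set c := (√(4 * π * T))⁻¹
  set b := (√(2 * T))⁻¹ with hb
  have hscale : (fun s => c * exp (-s ^ 2 / (4 * T))) = fun s => c * exp (-((b * s) ^ 2 / 2)) := by
    funext s
    rw [mul_pow, hb, inv_pow, sq_sqrt (by positivity)]
    field_simp
    ring_nf
  rw [hscale, iteratedDeriv_const_mul_field,
    iteratedDeriv_comp_const_mul (f := fun y => exp (-(y ^ 2 / 2))) (by fun_prop) b]
  calc |c * (b ^ k * iteratedDeriv k (fun y => exp (-(y ^ 2 / 2))) (b * s))|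
      = c * b ^ k * |iteratedDeriv k (fun y => exp (-(y ^ 2 / 2))) (b * s)| := by
        rw [abs_mul, abs_mul, abs_of_pos (by positivity : 0 < c),
          abs_of_pos (by positivity : 0 < b ^ k), mul_assoc]
    _ ≤ c * b ^ k * (2 * √((2 * k)! : ℝ)) := by
        gcongr
        exact (abs_iteratedDeriv_gaussian_le k _).trans
          (succ_factorial_le_two_mul_sqrt_factorial_two_mul k)
    _ = 2 * c * b ^ k * √((2 * k)! : ℝ) := by ring
    _ = _ := by rw [two_mul_inv_sqrt_four_pi_mul_mul_inv_sqrt_two_mul_pow hT]; ring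
end

section
/- Let n be a positive integer, let A be an n×n complex matrix, let d ≥ 3 be an integer, and let u₀ ∈ ℂⁿ. Suppose w : ℝ → ℂⁿ is twice continuously differentiable with w''(s) = −A·w(s) for all s, w(0) = u₀, and w'(0) = 0. Define u(t) := ∫_{−1}^{1} (1 − λ²)^{(d−3)/2} · w(λ·t) dλ. Then u is twice differentiable on ℝ \ {0}, and for every t ≠ 0, u''(t) + ((d−1)/t)·u'(t) = −A·u(t). -/
/-!
Write `K λ = (1 - λ²)^p` with `p = (d - 3) / 2`. Differentiating under the integral sign,
`u' t = ∫ λ K λ • w' (λ t)` and `u'' t = ∫ λ² K λ • w'' (λ t)`. The function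
`(1 - λ²)^(p + 1)` has derivative `-(d - 1) λ K λ` and vanishes at `λ = ±1`, so integrating
by parts against it gives `(d - 1) • u' t = t • ∫ (1 - λ²) K λ • w'' (λ t)`. Adding,
`u'' + ((d - 1) / t) • u' = ∫ K λ • w'' (λ t) = -A u`, since `-A` commutes with the integral.
-/

open Real Matrix

section
variable {E : Type*} [NormedAddCommGroup E] [NormedSpace ℝ E]

theorem hasDerivAt_intervalIntegral_smul_comp_mul {K : ℝ → ℝ} (hK : Continuous K)
    {f f' : ℝ → E} (hf : ∀ s, HasDerivAt f (f' s) s) (hf' : Continuous f') (a b t : ℝ) :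
    HasDerivAt (fun x => ∫ l in a..b, K l • f (l * x))
      (∫ l in a..b, (l * K l) • f' (l * t)) t := by
  have hfc : Continuous f := continuous_iff_continuousAt.2 fun s => (hf s).continuousAt
  have hF : ∀ x, Continuous fun l => K l • f (l * x) := fun x => by fun_prop
  have hF' : Continuous fun q : ℝ × ℝ => (q.1 * K q.1) • f' (q.1 * q.2) := by fun_prop
  obtain ⟨C, hC⟩ :=
    (isCompact_uIcc.prod (isCompact_closedBall t 1)).exists_bound_of_continuousOn hF'.continuousOn
  refine (intervalIntegral.hasDerivAt_integral_of_dominated_loc_of_deriv_le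
    (F' := fun x l => (l * K l) • f' (l * x)) (bound := fun _ => C)
    (Metric.ball_mem_nhds t one_pos)
    (.of_forall fun x => (hF x).aestronglyMeasurable) ((hF t).intervalIntegrable _ _)
    (by fun_prop : Continuous fun l => (l * K l) • f' (l * t)).aestronglyMeasurable ?_
    intervalIntegrable_const ?_).2
  · exact .of_forall fun l hl x hx =>
      hC (l, x) ⟨Set.uIoc_subset_uIcc hl, Metric.ball_subset_closedBall hx⟩
  · refine .of_forall fun l _ x _ => ?_
    have h := ((hf (l * x)).scomp x ((hasDerivAt_id x).const_mul l)).const_smul (K l)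
    exact h.congr_deriv (by rw [mul_one, smul_smul, mul_comm])

theorem continuous_one_sub_sq_rpow {p : ℝ} (hp : 0 ≤ p) :
    Continuous fun l : ℝ => (1 - l ^ 2) ^ p :=
  (continuous_const.sub (continuous_pow 2)).rpow_const fun _ => Or.inr hp

theorem hasDerivAt_one_sub_sq_rpow_add_one {p : ℝ} (hp : 0 ≤ p) (l : ℝ) :
    HasDerivAt (fun l : ℝ => (1 - l ^ 2) ^ (p + 1))
      (-(2 * (p + 1)) * (l * (1 - l ^ 2) ^ p)) l := by
  have h := ((hasDerivAt_pow 2 l).const_sub 1).rpow_const (p := p + 1) (Or.inr (by linarith))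
  rw [add_sub_cancel_right] at h
  exact h.congr_deriv (by ring)

theorem one_sub_sq_rpow_add_one {p : ℝ} (hp : p + 1 ≠ 0) {l : ℝ}
    (hl : l ∈ Set.uIcc (-1) 1) :
    (1 - l ^ 2) ^ (p + 1) = (1 - l ^ 2) * (1 - l ^ 2) ^ p := by
  rw [Set.uIcc_of_le (by norm_num)] at hl
  rw [rpow_add' (by nlinarith [hl.1, hl.2]) hp, rpow_one, mul_comm]

theorem integral_mul_one_sub_sq_rpow_smul_comp_mul [CompleteSpace E] {p : ℝ} (hp : 0 ≤ p)
    {g g' : ℝ → E} (hg : ∀ s, HasDerivAt g (g' s) s) (hg' : Continuous g') (t : ℝ) :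
    (2 * (p + 1)) • ∫ l in (-1 : ℝ)..1, (l * (1 - l ^ 2) ^ p) • g (l * t)
      = t • ∫ l in (-1 : ℝ)..1, (1 - l ^ 2) ^ (p + 1) • g' (l * t) := by
  have hgc : Continuous g := continuous_iff_continuousAt.2 fun s => (hg s).continuousAt
  have hK := continuous_one_sub_sq_rpow hp
  have hQ := continuous_one_sub_sq_rpow (p := p + 1) (by linarith)
  have hderiv : ∀ l, HasDerivAt (fun l => (1 - l ^ 2) ^ (p + 1) • g (l * t))
      ((1 - l ^ 2) ^ (p + 1) • (t • g' (l * t))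
        + (-(2 * (p + 1)) * (l * (1 - l ^ 2) ^ p)) • g (l * t)) l := fun l =>
    (hasDerivAt_one_sub_sq_rpow_add_one hp l).smul
      (((hg (l * t)).scomp l ((hasDerivAt_id l).mul_const t)).congr_deriv (by rw [one_mul]))
  have hvanish : ∫ l in (-1 : ℝ)..1, ((1 - l ^ 2) ^ (p + 1) • (t • g' (l * t))
      + (-(2 * (p + 1)) * (l * (1 - l ^ 2) ^ p)) • g (l * t)) = 0 := by
    rw [intervalIntegral.integral_eq_sub_of_hasDerivAt (fun l _ => hderiv l)
      ((by fun_prop : Continuous _).intervalIntegrable _ _)]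
    simp [zero_rpow (by linarith : p + 1 ≠ 0)]
  rw [intervalIntegral.integral_add ((by fun_prop : Continuous _).intervalIntegrable _ _)
    ((by fun_prop : Continuous _).intervalIntegrable _ _)] at hvanish
  have hQ_term : ∫ l in (-1 : ℝ)..1, (1 - l ^ 2) ^ (p + 1) • t • g' (l * t)
      = t • ∫ l in (-1 : ℝ)..1, (1 - l ^ 2) ^ (p + 1) • g' (l * t) := by
    rw [← intervalIntegral.integral_smul]
    simp_rw [smul_comm t]
  have hK_term : ∫ l in (-1 : ℝ)..1, (-(2 * (p + 1)) * (l * (1 - l ^ 2) ^ p)) • g (l * t)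
      = -((2 * (p + 1)) • ∫ l in (-1 : ℝ)..1, (l * (1 - l ^ 2) ^ p) • g (l * t)) := by
    rw [← intervalIntegral.integral_smul, ← intervalIntegral.integral_neg]
    simp_rw [neg_mul, neg_smul, mul_smul]
  rw [hQ_term, hK_term, add_neg_eq_zero] at hvanish
  exact hvanish.symm

noncomputable def epdMean (p : ℝ) (f : ℝ → E) (t : ℝ) : E :=
  ∫ l in (-1 : ℝ)..1, (1 - l ^ 2) ^ p • f (l * t)

theorem hasDerivAt_epdMean {p : ℝ} (hp : 0 ≤ p) {f f' : ℝ → E}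
    (hf : ∀ s, HasDerivAt f (f' s) s) (hf' : Continuous f') (t : ℝ) :
    HasDerivAt (epdMean p f) (∫ l in (-1 : ℝ)..1, (l * (1 - l ^ 2) ^ p) • f' (l * t)) t :=
  hasDerivAt_intervalIntegral_smul_comp_mul (continuous_one_sub_sq_rpow hp) hf hf' _ _ t

theorem deriv_epdMean {p : ℝ} (hp : 0 ≤ p) {f f' : ℝ → E}
    (hf : ∀ s, HasDerivAt f (f' s) s) (hf' : Continuous f') :
    deriv (epdMean p f) = fun t => ∫ l in (-1 : ℝ)..1, (l * (1 - l ^ 2) ^ p) • f' (l * t) :=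
  funext fun t => (hasDerivAt_epdMean hp hf hf' t).deriv

section
variable {p : ℝ} (hp : 0 ≤ p) {f f' f'' : ℝ → E} (hf : ∀ s, HasDerivAt f (f' s) s)
  (hf' : ∀ s, HasDerivAt f' (f'' s) s) (hf'' : Continuous f'')
include hp hf hf' hf''

theorem hasDerivAt_deriv_epdMean (t : ℝ) :
    HasDerivAt (deriv (epdMean p f))
      (∫ l in (-1 : ℝ)..1, (l * (l * (1 - l ^ 2) ^ p)) • f'' (l * t)) t := by
  rw [deriv_epdMean hp hf (continuous_iff_continuousAt.2 fun s => (hf' s).continuousAt)]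
  exact hasDerivAt_intervalIntegral_smul_comp_mul
    (continuous_id.mul (continuous_one_sub_sq_rpow hp)) hf' hf'' _ _ t

theorem epdMean_eulerPoissonDarboux [CompleteSpace E] {t : ℝ} (ht : t ≠ 0) :
    deriv (deriv (epdMean p f)) t + ((2 * (p + 1)) / t) • deriv (epdMean p f) t
      = epdMean p f'' t := by
  have hK := continuous_one_sub_sq_rpow hp
  have hQ := continuous_one_sub_sq_rpow (p := p + 1) (by linarith)
  rw [(hasDerivAt_deriv_epdMean hp hf hf' hf'' t).deriv,
    deriv_epdMean hp hf (continuous_iff_continuousAt.2 fun s => (hf' s).continuousAt),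
    div_eq_inv_mul, mul_smul, integral_mul_one_sub_sq_rpow_smul_comp_mul hp hf' hf'' t,
    inv_smul_smul₀ ht, ← intervalIntegral.integral_add
      ((by fun_prop : Continuous _).intervalIntegrable _ _)
      ((by fun_prop : Continuous _).intervalIntegrable _ _)]
  refine intervalIntegral.integral_congr fun l hl => ?_
  rw [← add_smul, one_sub_sq_rpow_add_one (by linarith) hl]
  congr 1
  ring

end

theorem epdMean_comp_continuousLinearMap {F : Type*} [NormedAddCommGroup F] [NormedSpace ℝ F]
    [CompleteSpace E] [CompleteSpace F] (L : E →L[ℝ] F) {p : ℝ} (hp : 0 ≤ p) {f : ℝ → E}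
    (hf : Continuous f) (t : ℝ) :
    epdMean p (fun s => L (f s)) t = L (epdMean p f t) := by
  have hK := continuous_one_sub_sq_rpow hp
  rw [epdMean, epdMean,
    ← L.intervalIntegral_comp_comm ((by fun_prop : Continuous _).intervalIntegrable _ _)]
  simp_rw [L.map_smul]

end

theorem euler_poisson_darboux_transmutation_general
    (n : ℕ) (A : Matrix (Fin n) (Fin n) ℂ)
    (d : ℕ) (hd : 3 ≤ d)
    (w : ℝ → Fin n → ℂ) (hw : ContDiff ℝ 2 w)
    (hw'' : ∀ s : ℝ, deriv (deriv w) s = -(A.mulVec (w s)))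
    (u : ℝ → Fin n → ℂ)
    (hu : u = fun t : ℝ =>
      ∫ lam in (-1 : ℝ)..1, ((1 - lam ^ 2) ^ (((d : ℝ) - 3) / 2) : ℝ) • w (lam * t)) :
    ∀ t : ℝ, t ≠ 0 →
      DifferentiableAt ℝ u t ∧ DifferentiableAt ℝ (deriv u) t ∧
        deriv (deriv u) t + (((d : ℝ) - 1) / t) • deriv u t = -(A.mulVec (u t)) := by
  intro t ht
  have hp : 0 ≤ ((d : ℝ) - 3) / 2 :=
    div_nonneg (sub_nonneg.2 (by exact_mod_cast hd)) zero_le_two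
  obtain ⟨hw_diff, -, hw'_contDiff⟩ :=
    contDiff_succ_iff_deriv.1 (show ContDiff ℝ (1 + 1) w from hw)
  obtain ⟨hw'_diff, hw''_cont⟩ := contDiff_one_iff_deriv.1 hw'_contDiff
  have hf : ∀ s, HasDerivAt w (deriv w s) s := fun s => (hw_diff s).hasDerivAt
  have hf' : ∀ s, HasDerivAt (deriv w) (deriv (deriv w) s) s := fun s => (hw'_diff s).hasDerivAt
  obtain rfl : u = epdMean (((d : ℝ) - 3) / 2) w := hu
  refine ⟨(hasDerivAt_epdMean hp hf hw'_contDiff.continuous t).differentiableAt,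
    (hasDerivAt_deriv_epdMean hp hf hf' hw''_cont t).differentiableAt, ?_⟩
  have hd_sub_one : (d : ℝ) - 1 = 2 * (((d : ℝ) - 3) / 2 + 1) := by ring
  rw [hd_sub_one, epdMean_eulerPoissonDarboux hp hf hf' hw''_cont ht, funext hw'']
  exact epdMean_comp_continuousLinearMap
    (-(LinearMap.toContinuousLinearMap (mulVecLin A)).restrictScalars ℝ) hp hw.continuous t

/-- Euler–Poisson–Darboux transmutation: the spherical-means average
`u(t) = ∫_{-1}^1 (1-λ²)^{(d-3)/2} w(λt) dλ` of a solution of the abstract wave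
equation `w'' = -Aw`, `w(0) = u₀`, `w'(0) = 0` satisfies the
Euler–Poisson–Darboux equation `u'' + ((d-1)/t) u' = -Au` away from `t = 0`. -/
theorem euler_poisson_darboux_transmutation
    (n : ℕ) (hn : 0 < n) (A : Matrix (Fin n) (Fin n) ℂ)
    (d : ℕ) (hd : 3 ≤ d) (u₀ : Fin n → ℂ)
    (w : ℝ → Fin n → ℂ) (hw : ContDiff ℝ 2 w)
    (hw'' : ∀ s : ℝ, deriv (deriv w) s = -(A.mulVec (w s)))
    (hw0 : w 0 = u₀) (hw'0 : deriv w 0 = 0)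
    (u : ℝ → Fin n → ℂ)
    (hu : u = fun t : ℝ =>
      ∫ lam in (-1 : ℝ)..1, ((1 - lam ^ 2) ^ (((d : ℝ) - 3) / 2) : ℝ) • w (lam * t)) :
    ∀ t : ℝ, t ≠ 0 →
      DifferentiableAt ℝ u t ∧ DifferentiableAt ℝ (deriv u) t ∧
        deriv (deriv u) t + (((d : ℝ) - 1) / t) • deriv u t = -(A.mulVec (u t)) :=
  euler_poisson_darboux_transmutation_general n A d hd w hw hw'' u hu
end

section
/- Let y₀ : ℝ → ℝ be twice continuously differentiable with y₀, y₀', and y₀'' all bounded on ℝ. For t > 0 and x ∈ ℝ define u(t, x) := ∫_ℝ (2π)^{−1/2} e^{−α²/2} · y₀(x − √(2t)·α) dα. Then for every t > 0 and x ∈ ℝ, the partial derivatives ∂_t u(t,x) and ∂²_{xx} u(t,x) exist and ∂_t u(t, x) = ∂²_{xx} u(t, x). -/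
/-!
Write `φ` for the standard normal density and `A f s x = ∫ φ(α) f(x - sα) dα`, so that
`u t = A y₀ √(2t)`. Differentiating under the integral sign gives `∂ₓ² A y₀ s = A y₀'' s` and
`∂ₛ A y₀ s x = -∫ α φ(α) y₀'(x - sα) dα`. Since `φ' = -αφ`, integrating by parts (Stein's identity)
turns the latter into `s · A y₀'' s x`, and the chain rule with `d√(2t)/dt = 1/√(2t)` cancels
the factor `s`.
-/

open MeasureTheory Real ProbabilityTheory

lemma gaussianPDFReal_zero_one (α : ℝ) :
    gaussianPDFReal 0 1 α = (√(2 * π))⁻¹ * exp (-α ^ 2 / 2) := by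
  simp [gaussianPDFReal]

lemma integrable_id_mul_gaussianPDFReal_zero_one :
    Integrable fun α : ℝ => α * gaussianPDFReal 0 1 α := by
  have h := (integrable_mul_exp_neg_mul_sq (by norm_num : (0 : ℝ) < 1 / 2)).const_mul
    (√(2 * π))⁻¹
  refine h.congr (ae_of_all _ fun α => ?_)
  simp only [gaussianPDFReal_zero_one]
  ring_nf

lemma hasDerivAt_gaussianPDFReal_zero_one (α : ℝ) :
    HasDerivAt (gaussianPDFReal 0 1) (-(α * gaussianPDFReal 0 1 α)) α := by
  have hq : HasDerivAt (fun β : ℝ => -β ^ 2 / 2) (-α) α := by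
    simpa using ((hasDerivAt_pow 2 α).neg.div_const 2).congr_deriv (by push_cast; ring)
  rw [funext gaussianPDFReal_zero_one]
  refine (hq.exp.const_mul _).congr_deriv ?_
  beta_reduce
  ring

lemma MeasureTheory.Integrable.mul_of_abs_le {w g : ℝ → ℝ} {C : ℝ} (hw : Integrable w)
    (hg : Continuous g) (hC : ∀ α, |g α| ≤ C) : Integrable fun α => w α * g α :=
  hw.mul_bdd hg.aestronglyMeasurable (ae_of_all _ fun α => (Real.norm_eq_abs _).trans_le (hC α))

/-- Stein's identity. -/
theorem integral_id_mul_gaussianPDFReal_mul {g g' : ℝ → ℝ} {C C' : ℝ}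
    (hg : ∀ α, HasDerivAt g (g' α) α) (hg_bdd : ∀ α, |g α| ≤ C)
    (hg' : Continuous g') (hg'_bdd : ∀ α, |g' α| ≤ C') :
    ∫ α, α * gaussianPDFReal 0 1 α * g α = ∫ α, gaussianPDFReal 0 1 α * g' α := by
  have hg_cont : Continuous g := continuous_iff_continuousAt.2 fun α => (hg α).continuousAt
  have h_int₁ := integrable_id_mul_gaussianPDFReal_zero_one.mul_of_abs_le hg_cont hg_bdd
  have h_int₂ := (integrable_gaussianPDFReal 0 1).mul_of_abs_le hg' hg'_bdd
  have h_zero : ∫ α, (gaussianPDFReal 0 1 α * g' α - α * gaussianPDFReal 0 1 α * g α) = 0 :=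
    integral_eq_zero_of_hasDerivAt_of_integrable
      (fun α => ((hasDerivAt_gaussianPDFReal_zero_one α).mul (hg α)).congr_deriv (by ring))
      (h_int₂.sub h_int₁) ((integrable_gaussianPDFReal 0 1).mul_of_abs_le hg_cont hg_bdd)
  rw [integral_sub h_int₂ h_int₁, sub_eq_zero] at h_zero
  exact h_zero.symm

/-- `gaussianAverage f s x = 𝔼[f (x - s Z)]` for a standard normal `Z`. -/
noncomputable def gaussianAverage (f : ℝ → ℝ) (s x : ℝ) : ℝ :=
  ∫ α, gaussianPDFReal 0 1 α * f (x - s * α)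

section

variable {f : ℝ → ℝ} {C : ℝ}

lemma integrable_gaussianPDFReal_mul_comp (hf : Continuous f) (hf_bdd : ∀ z, |f z| ≤ C)
    (s x : ℝ) : Integrable fun α => gaussianPDFReal 0 1 α * f (x - s * α) :=
  (integrable_gaussianPDFReal 0 1).mul_of_abs_le (by fun_prop) fun _ => hf_bdd _

theorem hasDerivAt_gaussianAverage (hf : ContDiff ℝ 1 f) (hf_bdd : ∀ z, |f z| ≤ C)
    (hf'_bdd : ∀ z, |deriv f z| ≤ C) (s x : ℝ) :
    HasDerivAt (gaussianAverage f s) (gaussianAverage (deriv f) s x) x := by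
  have hf' : Continuous (deriv f) := hf.continuous_deriv le_rfl
  refine (hasDerivAt_integral_of_dominated_loc_of_deriv_le
    (F' := fun y α => gaussianPDFReal 0 1 α * deriv f (y - s * α))
    (bound := fun α => gaussianPDFReal 0 1 α * C) Filter.univ_mem
    (Filter.Eventually.of_forall fun y =>
      (integrable_gaussianPDFReal_mul_comp hf.continuous hf_bdd s y).aestronglyMeasurable)
    (integrable_gaussianPDFReal_mul_comp hf.continuous hf_bdd s x)
    (integrable_gaussianPDFReal_mul_comp hf' hf'_bdd s x).aestronglyMeasurable
    (ae_of_all _ fun α y _ => ?_) ((integrable_gaussianPDFReal 0 1).mul_const C)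
    (ae_of_all _ fun α y _ => ?_)).2
  · rw [norm_mul, Real.norm_of_nonneg (gaussianPDFReal_nonneg 0 1 α), Real.norm_eq_abs]
    exact mul_le_mul_of_nonneg_left (hf'_bdd _) (gaussianPDFReal_nonneg 0 1 α)
  · exact ((hf.differentiable one_ne_zero _).hasDerivAt.comp_sub_const y (s * α)).const_mul _

theorem hasDerivAt_gaussianAverage_scale_neg_integral (hf : ContDiff ℝ 1 f)
    (hf_bdd : ∀ z, |f z| ≤ C) (hf'_bdd : ∀ z, |deriv f z| ≤ C) (s x : ℝ) :
    HasDerivAt (fun s => gaussianAverage f s x)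
      (-∫ α, α * gaussianPDFReal 0 1 α * deriv f (x - s * α)) s := by
  have hf' : Continuous (deriv f) := hf.continuous_deriv le_rfl
  rw [← integral_neg]
  refine (hasDerivAt_integral_of_dominated_loc_of_deriv_le
    (F' := fun r α => -(α * gaussianPDFReal 0 1 α * deriv f (x - r * α)))
    (bound := fun α => ‖α * gaussianPDFReal 0 1 α‖ * C) Filter.univ_mem
    (Filter.Eventually.of_forall fun r =>
      (integrable_gaussianPDFReal_mul_comp hf.continuous hf_bdd r x).aestronglyMeasurable)
    (integrable_gaussianPDFReal_mul_comp hf.continuous hf_bdd s x)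
    (integrable_id_mul_gaussianPDFReal_zero_one.mul_of_abs_le (by fun_prop)
      fun _ => hf'_bdd _).neg.aestronglyMeasurable
    (ae_of_all _ fun α r _ => ?_) (integrable_id_mul_gaussianPDFReal_zero_one.norm.mul_const C)
    (ae_of_all _ fun α r _ => ?_)).2
  · rw [norm_neg, norm_mul _ (deriv f _), Real.norm_eq_abs (deriv f _)]
    exact mul_le_mul_of_nonneg_left (hf'_bdd _) (norm_nonneg _)
  · refine (((hf.differentiable one_ne_zero _).hasDerivAt.comp r
      (((hasDerivAt_id' r).mul_const α).const_sub x)).const_mul _).congr_deriv ?_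
    ring

theorem integral_id_mul_gaussianPDFReal_mul_comp (hf : ContDiff ℝ 1 f)
    (hf_bdd : ∀ z, |f z| ≤ C) (hf'_bdd : ∀ z, |deriv f z| ≤ C) (s x : ℝ) :
    ∫ α, α * gaussianPDFReal 0 1 α * f (x - s * α) = -s * gaussianAverage (deriv f) s x := by
  rw [integral_id_mul_gaussianPDFReal_mul (g := fun β => f (x - s * β))
    (fun α => (hf.differentiable one_ne_zero _).hasDerivAt.comp α
      (((hasDerivAt_id' α).const_mul s).const_sub x)) (fun _ => hf_bdd _)
    (by fun_prop) (C' := C * |s|) fun α => ?_, gaussianAverage, ← integral_const_mul]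
  · congr 1 with α
    ring
  · rw [abs_mul, abs_neg, mul_one]
    exact mul_le_mul_of_nonneg_right (hf'_bdd _) (abs_nonneg s)

theorem hasDerivAt_gaussianAverage_scale (hf : ContDiff ℝ 2 f) (hf_bdd : ∀ z, |f z| ≤ C)
    (hf'_bdd : ∀ z, |deriv f z| ≤ C) (hf''_bdd : ∀ z, |deriv (deriv f) z| ≤ C) (s x : ℝ) :
    HasDerivAt (fun s => gaussianAverage f s x) (s * gaussianAverage (deriv (deriv f)) s x) s := by
  have h := hasDerivAt_gaussianAverage_scale_neg_integral (hf.of_le one_le_two) hf_bdd hf'_bdd s x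
  rwa [integral_id_mul_gaussianPDFReal_mul_comp hf.deriv' hf'_bdd hf''_bdd, neg_mul, neg_neg] at h

theorem hasDerivAt_gaussianAverage_sqrt_two_mul (hf : ContDiff ℝ 2 f) (hf_bdd : ∀ z, |f z| ≤ C)
    (hf'_bdd : ∀ z, |deriv f z| ≤ C) (hf''_bdd : ∀ z, |deriv (deriv f) z| ≤ C) {t : ℝ}
    (ht : 0 < t) (x : ℝ) :
    HasDerivAt (fun τ => gaussianAverage f √(2 * τ) x)
      (gaussianAverage (deriv (deriv f)) √(2 * t) x) t := by
  have h_sqrt : HasDerivAt (fun τ => √(2 * τ)) (√(2 * t))⁻¹ t :=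
    (((hasDerivAt_id' t).const_mul 2).sqrt (by positivity)).congr_deriv (by field_simp)
  refine ((hasDerivAt_gaussianAverage_scale hf hf_bdd hf'_bdd hf''_bdd _ x).comp t
    h_sqrt).congr_deriv ?_
  field_simp

end

/-- Transport–heat averaging: the Gaussian velocity average
`u(t,x) = ∫ (2π)^{-1/2} e^{-α²/2} y₀(x - √(2t) α) dα` of the transported data
solves the heat equation `∂_t u = ∂²_{xx} u` for `t > 0`. -/
theorem transport_heat_averaging
    (y₀ : ℝ → ℝ) (hy : ContDiff ℝ 2 y₀)
    (C : ℝ) (hbound : ∀ x : ℝ, |y₀ x| ≤ C ∧ |deriv y₀ x| ≤ C ∧ |deriv (deriv y₀) x| ≤ C)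
    (u : ℝ → ℝ → ℝ)
    (hu : u = fun t x =>
      ∫ α : ℝ, (Real.sqrt (2 * Real.pi))⁻¹ * Real.exp (-α ^ 2 / 2) *
        y₀ (x - Real.sqrt (2 * t) * α)) :
    ∀ t : ℝ, 0 < t → ∀ x : ℝ,
      DifferentiableAt ℝ (u t) x ∧ DifferentiableAt ℝ (deriv (u t)) x ∧
        HasDerivAt (fun τ : ℝ => u τ x) (deriv (deriv (u t)) x) t := by
  intro t ht x
  have hu' : u = fun t => gaussianAverage y₀ √(2 * t) := by
    ext t x
    simp only [hu, gaussianAverage, gaussianPDFReal_zero_one]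
  subst hu'
  have hb₀ z := (hbound z).1
  have hb₁ z := (hbound z).2.1
  have hb₂ z := (hbound z).2.2
  have hu_x y := hasDerivAt_gaussianAverage (hy.of_le one_le_two) hb₀ hb₁ √(2 * t) y
  have hu_xx y : HasDerivAt (deriv (gaussianAverage y₀ √(2 * t)))
      (gaussianAverage (deriv (deriv y₀)) √(2 * t) y) y := by
    rw [funext fun y => (hu_x y).deriv]
    exact hasDerivAt_gaussianAverage hy.deriv' hb₁ hb₂ _ y
  refine ⟨(hu_x x).differentiableAt, (hu_xx x).differentiableAt, ?_⟩
  rw [(hu_xx x).deriv]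
  exact hasDerivAt_gaussianAverage_sqrt_two_mul hy hb₀ hb₁ hb₂ ht x
end
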